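/- arXiv:2209.10443 — 3 statements merged into one kernel-verified Lean document; each statement's English description precedes it below -/
import Mathlib

section
/- For every natural number Δ, the identity Σ_{n=0}^{Δ} Σ_{k≥0} binom(Δ,n)·binom(n−1,k)·(−1)^{n+k}·x^k·(1−x)^{n−1−k}·y^k = x^Δ·(1+y)^Δ·(1−x−xy)^{−1} holds in ℚ[[x,y]]; equivalently, for every k ∈ ℕ, the finite sum Σ_{n=0}^{Δ} binom(Δ,n)·binom(n−1,k)·(−1)^{n+k}·x^k·(1−x)^{n−1−k} (an element of ℚ[[x]]) equals the coefficient of y^k in x^Δ·(1+y)^Δ·(1−x−xy)^{−1}. -/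
/-- The generalized binomial coefficient `binom n k = n(n-1)⋯(n-k+1)/k!`
for `n : ℤ` and `k : ℕ`. -/
def binom (n : ℤ) (k : ℕ) : ℚ :=
  (∏ i ∈ Finset.range k, ((n : ℚ) - (i : ℚ))) / (k.factorial : ℚ)

/-- We regard `ℚ[[x,y]]` as `(ℚ[[x]])[[y]]`: `x` is `PowerSeries.X : ℚ[[x]]`
(embedded by the constant map `C`) and `y` is `PowerSeries.X : (ℚ[[x]])[[y]]`. -/
noncomputable abbrev Qx : Type := PowerSeries ℚ

/-!
Write `w = 1 - x - xy`. Since `x (1 + y) = 1 - w`, the binomial theorem gives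
`x^Δ (1 + y)^Δ w⁻¹ = ∑ₙ binom(Δ,n) (-1)^n w^(n-1)`. Factoring `w = (1 - x) (1 - (x / (1 - x)) y)`,
the generalized binomial series shows that the coefficient of `y^k` in `w^m` is
`binom(m,k) (-x)^k (1 - x)^(m-k)` for every `m : ℤ`.
-/

open Finset PowerSeries

lemma binom_eq_choose (m : ℤ) (k : ℕ) : binom m k = Ring.choose m k := by
  rw [← eq_intCast (Int.castRingHom ℚ), Ring.map_choose, Ring.choose_eq_smul, binom,
    ← Polynomial.aeval_eq_smeval, Polynomial.aeval_def, ← Polynomial.eval_map,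
    descPochhammer_map, descPochhammer_eval_eq_prod_range, smul_eq_mul, div_eq_inv_mul]
  rfl

lemma Units.one_sub_pow_mul_zpow_neg_one {S : Type*} [CommRing S] (w : Sˣ) (d : ℕ) :
    (1 - (w : S)) ^ d * ((w ^ (-1 : ℤ) : Sˣ) : S) =
      ∑ n ∈ range (d + 1), ((-1) ^ n * d.choose n : ℤ) • ((w ^ ((n : ℤ) - 1) : Sˣ) : S) := by
  rw [← neg_add_eq_sub, add_pow, sum_mul]
  refine sum_congr rfl fun n _ => ?_
  rw [zpow_sub_one, zpow_neg_one, Units.val_mul, zpow_natCast, Units.val_pow_eq_pow_val,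
    neg_pow, one_pow, zsmul_eq_mul]
  push_cast
  ring

namespace PowerSeries

variable {A : Type*} [CommRing A]

theorem val_zpow_eq_rescale_binomialSeries (a : A) (u : A⟦X⟧ˣ) (hu : (u : A⟦X⟧) = 1 + C a * X)
    (m : ℤ) : ((u ^ m : A⟦X⟧ˣ) : A⟦X⟧) = rescale a (binomialSeries A m) := by
  have hnat (n : ℕ) : ((u ^ (n : ℤ) : A⟦X⟧ˣ) : A⟦X⟧) = rescale a (binomialSeries A (n : ℤ)) := by
    rw [zpow_natCast, Units.val_pow_eq_pow_val, hu, binomialSeries_nat, map_pow, map_add,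
      map_one, rescale_X]
  obtain ⟨n, rfl | rfl⟩ := Int.eq_nat_or_neg m
  · exact hnat n
  · rw [zpow_neg]
    refine Units.inv_eq_of_mul_eq_one_left ?_
    rw [hnat, ← map_mul, ← binomialSeries_add, neg_add_cancel, binomialSeries_zero, map_one]

theorem coeff_val_zpow_of_val_eq_C_add_C_mul_X (v : Aˣ) (c : A) (w : A⟦X⟧ˣ)
    (hw : (w : A⟦X⟧) = C (v : A) + C c * X) (m : ℤ) (k : ℕ) :
    coeff k ((w ^ m : A⟦X⟧ˣ) : A⟦X⟧) = Ring.choose m k • (c ^ k * ((v ^ (m - k) : Aˣ) : A)) := by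
  set vC : A⟦X⟧ˣ := Units.map (C (R := A) : A →* A⟦X⟧) v
  have hu : ((vC⁻¹ * w : A⟦X⟧ˣ) : A⟦X⟧) = 1 + C (↑v⁻¹ * c) * X := by
    simp only [vC, Units.val_mul, hw, ← map_inv, Units.coe_map, MonoidHom.coe_coe]
    rw [mul_add, ← map_mul, Units.inv_mul, map_one, ← mul_assoc, ← map_mul]
  have hsplit : w ^ m = vC ^ m * (vC⁻¹ * w) ^ m := by rw [← mul_zpow, mul_inv_cancel_left]
  rw [hsplit, Units.val_mul, ← map_zpow]
  simp only [Units.coe_map, MonoidHom.coe_coe]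
  rw [coeff_C_mul, val_zpow_eq_rescale_binomialSeries _ _ hu, coeff_rescale, binomialSeries_coeff,
    zpow_sub, zpow_natCast, ← inv_pow, Units.val_mul, Units.val_pow_eq_pow_val]
  simp only [zsmul_eq_mul]
  ring

end PowerSeries

/-- For every natural number `Δ` and every `k : ℕ`, the finite sum
`Σ_{n=0}^{Δ} binom(Δ,n)·binom(n−1,k)·(−1)^{n+k}·x^k·(1−x)^{n−1−k}` (an element of
`ℚ[[x]]`) equals the coefficient of `y^k` in `x^Δ·(1+y)^Δ·(1−x−xy)^{−1}`;
here `V` is the unit `1−x` of `ℚ[[x]]`, `W` is the unit `1−x−xy` of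
`(ℚ[[x]])[[y]]`, and negative integer powers are taken in the groups of units. -/
theorem stmt_6 (Δ : ℕ) (V : Qxˣ) (hV : (V : Qx) = 1 - PowerSeries.X)
    (W : (PowerSeries Qx)ˣ)
    (hW : (W : PowerSeries Qx) =
      1 - PowerSeries.C (R := Qx) PowerSeries.X -
        PowerSeries.C (R := Qx) PowerSeries.X * PowerSeries.X)
    (k : ℕ) :
    PowerSeries.coeff (R := Qx) k
        (PowerSeries.C (R := Qx) (PowerSeries.X ^ Δ) * (1 + PowerSeries.X) ^ Δ *
          ((W ^ (-1 : ℤ) : (PowerSeries Qx)ˣ) : PowerSeries Qx)) =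
      ∑ n ∈ Finset.range (Δ + 1),
        PowerSeries.C (R := ℚ) (binom (Δ : ℤ) n * binom ((n : ℤ) - 1) k * (-1) ^ (n + k)) *
          PowerSeries.X ^ k *
          ((V ^ ((n : ℤ) - 1 - (k : ℤ)) : Qxˣ) : Qx) := by
  have hW_factor : (W : PowerSeries Qx) = C (V : Qx) + C (-X) * X := by
    rw [hW, hV, map_sub, map_one, map_neg]
    ring
  have h_one_sub_W : C (X ^ Δ) * (1 + X) ^ Δ = (1 - (W : PowerSeries Qx)) ^ Δ := by
    rw [hW, map_pow, ← mul_pow]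
    ring
  rw [h_one_sub_W, Units.one_sub_pow_mul_zpow_neg_one, map_sum]
  refine sum_congr rfl fun n _ => ?_
  rw [map_zsmul, PowerSeries.coeff_val_zpow_of_val_eq_C_add_C_mul_X V (-X) W hW_factor,
    binom_eq_choose, binom_eq_choose, Ring.choose_natCast]
  simp only [zsmul_eq_mul, map_mul, map_pow, map_neg, map_one, map_intCast]
  push_cast
  ring
end

section
/- Let r ≥ 3, A ∈ 𝒯_r and e ∈ E(A). Then for every point z ∈ X_r and every function f : ℂ^r → ℂ that is complex-differentiable at z, one has Σ_{l ∈ Leaf(e)} (z_l − z_{R(d(e))}) · ∂f/∂z_l (z) = ζ_e(z) · ∂(f ∘ Φ_A)/∂ζ_e (Ψ_A(z)), where ∂/∂ζ_e denotes the partial derivative in the ζ_e-slot of the A-coordinates; that is, the differential operator ζ_e d/dζ_e in A-coordinates equals Σ_{l ∈ Leaf(e)} (z_l − z_{R(d(e))}) ∂_l on X_r. -/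
noncomputable section

/-- A plane (rooted) binary tree with leaves labeled by elements of `Fin r`. -/
inductive PTree (r : ℕ) : Type
  | leaf : Fin r → PTree r
  | node : PTree r → PTree r → PTree r

namespace PTree

variable {r : ℕ}

/-- The labels of the leaves of the tree, listed from left to right. -/
def leafLabels : PTree r → List (Fin r)
  | .leaf i => [i]
  | .node l t => l.leafLabels ++ t.leafLabels

/-- `A ∈ 𝒯_r`: the `r` leaves of `A` are labeled bijectively by `Fin r`. -/
def IsTree (A : PTree r) : Prop :=
  A.leafLabels.Nodup ∧ A.leafLabels.length = r

/-- The label of the rightmost leaf of the tree. -/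
def rightmost : PTree r → Fin r
  | .leaf i => i
  | .node _ t => t.rightmost

/-- The subtree of a tree at the address `p` (`false` = go to the left child,
`true` = go to the right child), if the address is valid. -/
def subtreeAt : PTree r → List Bool → Option (PTree r)
  | t, [] => some t
  | .leaf _, _ :: _ => none
  | .node l t, b :: p => (if b then t else l).subtreeAt p

/-- `p` is the address of an internal (non-leaf) vertex of `A`; the set of such
addresses is `V(A)`. -/
def IsVertex (A : PTree r) (p : List Bool) : Prop :=
  ∃ l t : PTree r, A.subtreeAt p = some (.node l t)

/-- `p` is the address of the lower endpoint `d(e)` of an internal edge `e` of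
`A` (an edge not adjacent to a leaf); the upper endpoint `u(e)` is at the
address `p.dropLast`.  The set of such addresses is `E(A)`. -/
def IsEdge (A : PTree r) (p : List Bool) : Prop :=
  p ≠ [] ∧ A.IsVertex p

/-- The type `E(A)` of internal edges of `A`. -/
abbrev Edge (A : PTree r) : Type := {p : List Bool // A.IsEdge p}

/-- `x_v = z_{L(v)} − z_{R(v)}` for the internal vertex `v` given as the
subtree rooted at it (junk value `0` at leaves). -/
def xval (z : Fin r → ℂ) : PTree r → ℂ
  | .leaf _ => 0
  | .node l t => z l.rightmost - z t.rightmost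

/-- The coordinate `x_v` for the vertex `v` of `A` with address `p`. -/
def xAt (A : PTree r) (z : Fin r → ℂ) (p : List Bool) : ℂ :=
  match A.subtreeAt p with
  | some t => xval z t
  | none => 0

/-- The coordinate `ζ_e = x_{d(e)} / x_{u(e)}` for the edge of `A` whose lower
endpoint has address `p` (its upper endpoint has address `p.dropLast`). -/
def zetaAt (A : PTree r) (z : Fin r → ℂ) (p : List Bool) : ℂ :=
  xAt A z p / xAt A z p.dropLast

/-- `Leaf(e)`: the labels of the leaves descending from the vertex of `A` with
address `p`. -/
def leavesAt (A : PTree r) (p : List Bool) : List (Fin r) :=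
  ((A.subtreeAt p).map leafLabels).getD []

/-- The label of the rightmost leaf descending from the vertex of `A` with
address `p`. -/
def rightmostAt (A : PTree r) (p : List Bool) : Option (Fin r) :=
  (A.subtreeAt p).map rightmost

end PTree

/-- The configuration space `X_r = {(z_1,…,z_r) ∈ ℂ^r : z_i ≠ z_j for i ≠ j}`. -/
def ConfigSpace (r : ℕ) : Set (Fin r → ℂ) :=
  {z | ∀ i j : Fin r, i ≠ j → z i ≠ z j}

namespace PTree

variable {r : ℕ}

/-- The `A`-coordinate map `Ψ_A = (z_A, x_A, (ζ_e)_{e ∈ E(A)})`, where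
`z_A = z_{r_A}` (`r_A` the rightmost leaf of `A`) and `x_A = x_{t_A}` (`t_A`
the root of `A`). -/
def psi (A : PTree r) (z : Fin r → ℂ) : ℂ × ℂ × (A.Edge → ℂ) :=
  (z A.rightmost, xval z A, fun e => A.zetaAt z e.1)

/-- The variable index type for the polynomial ring
`ℂ[z_A, x_A, ζ_e (e ∈ E(A))]`. -/
abbrev Idx (A : PTree r) : Type := Unit ⊕ Unit ⊕ A.Edge

/-- The point of `ℂ^{Idx A}` corresponding to `w = (z_A, x_A, (ζ_e)_e)`. -/
def assign (A : PTree r) (w : ℂ × ℂ × (A.Edge → ℂ)) : A.Idx → ℂ :=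
  Sum.elim (fun _ => w.1) (Sum.elim (fun _ => w.2.1) fun e => w.2.2 e)

/-- The polynomial map `Φ_A : ℂ × ℂ × ℂ^{E(A)} → ℂ^r` determined by a family
of polynomials `P`. -/
def phiMap (A : PTree r) (P : Fin r → MvPolynomial A.Idx ℂ)
    (w : ℂ × ℂ × (A.Edge → ℂ)) : Fin r → ℂ :=
  fun i => MvPolynomial.eval (A.assign w) (P i)

/-- `Φ_A ∘ Ψ_A = id` on `X_r`. -/
def PhiPsiId (A : PTree r) (P : Fin r → MvPolynomial A.Idx ℂ) : Prop :=
  ∀ z ∈ ConfigSpace r, A.phiMap P (A.psi z) = z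

/-- `Ψ_A ∘ Φ_A = id` on `ℂ × ℂ^× × (ℂ^×)^{E(A)}`. -/
def PsiPhiId (A : PTree r) (P : Fin r → MvPolynomial A.Idx ℂ) : Prop :=
  ∀ w : ℂ × ℂ × (A.Edge → ℂ), w.2.1 ≠ 0 → (∀ e, w.2.2 e ≠ 0) →
    A.psi (A.phiMap P w) = w

end PTree


/-! Dilating the points labelled by `Leaf(e)` about `z_{R(d(e))}` by a factor `c` multiplies
`x_v` by `c` for every vertex `v` at or below `d(e)` and fixes every other `x_v`: a vertex not
below `d(e)` sees at most the leaf `R(d(e))` of `Leaf(e)`, which is the fixed centre. So in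
`A`-coordinates this dilation moves only `ζ_e`, to `c ζ_e`. Dilating by `t / ζ_e(z)` therefore
traces, inside `X_r`, the image under `Φ_A` of the line through `Ψ_A(z)` in the `ζ_e`-slot, and the
chain rule along this curve at `t = ζ_e(z)` gives the identity. -/

section Dilate

variable {ι 𝕜 : Type*} [DecidableEq ι]

def dilate [CommRing 𝕜] (S : List ι) (ρ : ι) (c : 𝕜) (z : ι → 𝕜) : ι → 𝕜 :=
  fun m => if m ∈ S then z ρ + c * (z m - z ρ) else z m

variable {S : List ι} {ρ : ι} {z : ι → 𝕜}

theorem dilate_one [CommRing 𝕜] : dilate S ρ (1 : 𝕜) z = z := by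
  funext m
  simp [dilate]

theorem dilate_apply_of_mem_imp [CommRing 𝕜] {c : 𝕜} {m : ι} (h : m ∈ S → m = ρ) :
    dilate S ρ c z m = z m := by
  by_cases hm : m ∈ S
  · simp [dilate, h hm]
  · simp [dilate, hm]

theorem dilate_sub_dilate [CommRing 𝕜] {c : 𝕜} {a b : ι} (ha : a ∈ S) (hb : b ∈ S) :
    dilate S ρ c z a - dilate S ρ c z b = c * (z a - z b) := by
  simp only [dilate, if_pos ha, if_pos hb]
  ring

theorem hasDerivAt_dilate [Fintype ι] [NontriviallyNormedField 𝕜] (c : 𝕜) :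
    HasDerivAt (fun c => dilate S ρ c z) (fun m => if m ∈ S then z m - z ρ else 0) c := by
  refine hasDerivAt_pi.2 fun m => ?_
  by_cases hm : m ∈ S
  · simpa [dilate, hm] using ((hasDerivAt_id c).mul_const (z m - z ρ)).const_add (z ρ)
  · simpa [dilate, hm] using hasDerivAt_const c (z m)

end Dilate

theorem sum_map_mul_apply_single {ι 𝕜 F : Type*} [DecidableEq ι] [CommSemiring 𝕜]
    [FunLike F (ι → 𝕜) 𝕜] [LinearMapClass F 𝕜 (ι → 𝕜) 𝕜] (D : F) {L : List ι} (hL : L.Nodup)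
    (c : ι → 𝕜) :
    (L.map fun l => c l * D (Pi.single l 1)).sum = D fun m => if m ∈ L then c m else 0 := by
  have hsum : (fun m => if m ∈ L then c m else 0) = ∑ l ∈ L.toFinset, c l • Pi.single l 1 := by
    funext m
    simp [Finset.sum_apply, Pi.single_apply]
  rw [hsum, map_sum, List.sum_toFinset _ hL]
  simp only [map_smul, smul_eq_mul]

theorem isOpen_configSpace (r : ℕ) : IsOpen (ConfigSpace r) := by
  simp only [ConfigSpace, Set.ofPred_forall]
  refine isOpen_iInter_of_finite fun i => isOpen_iInter_of_finite fun j =>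
    isOpen_iInter_of_finite fun _ => ?_
  exact isOpen_ne_fun (continuous_apply i) (continuous_apply j)

namespace List

variable {α : Type*}

theorem not_prefix_dropLast {p : List α} (hp : p ≠ []) : ¬ (p <+: p.dropLast) :=
  fun h => by
    have := h.length_le
    have := List.length_pos_iff.2 hp
    rw [List.length_dropLast] at *
    omega

theorem prefix_dropLast_of_ne {e p : List α} (h : e <+: p) (hne : e ≠ p) :
    e <+: p.dropLast := by
  have hp : p ≠ [] := by rintro rfl; exact hne (List.prefix_nil.1 h)
  rw [← List.dropLast_append_getLast hp, List.prefix_concat_iff] at h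
  exact h.resolve_left fun h' => hne (h'.trans (List.dropLast_append_getLast hp))

end List

namespace PTree

variable {r : ℕ}

theorem rightmost_mem_leafLabels : ∀ T : PTree r, T.rightmost ∈ T.leafLabels
  | .leaf _ => List.mem_singleton_self _
  | .node _ t => List.mem_append_right _ (rightmost_mem_leafLabels t)

theorem subtreeAt_nil (A : PTree r) : A.subtreeAt [] = some A := by
  cases A <;> rfl

theorem subtreeAt_append : ∀ (A : PTree r) (p q : List Bool),
    A.subtreeAt (p ++ q) = (A.subtreeAt p).bind (·.subtreeAt q)
  | A, [], q => by rw [List.nil_append, subtreeAt_nil, Option.bind_some]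
  | .leaf _, _ :: _, _ => rfl
  | .node _ _, _ :: p, q => subtreeAt_append _ p q

theorem leafLabels_sublist_of_subtreeAt : ∀ {A B : PTree r} {p : List Bool},
    A.subtreeAt p = some B → B.leafLabels.Sublist A.leafLabels
  | A, B, [], h => by
    rw [subtreeAt_nil, Option.some_inj] at h
    exact h ▸ List.Sublist.refl _
  | .leaf _, _, _ :: _, h => by cases h
  | .node L _, _, false :: _, h =>
    (leafLabels_sublist_of_subtreeAt (A := L) h).trans (List.sublist_append_left _ _)
  | .node _ R, _, true :: _, h =>
    (leafLabels_sublist_of_subtreeAt (A := R) h).trans (List.sublist_append_right _ _)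

theorem nodup_leafLabels_of_subtreeAt {A B : PTree r} {p : List Bool}
    (hN : A.leafLabels.Nodup) (h : A.subtreeAt p = some B) : B.leafLabels.Nodup :=
  hN.sublist (leafLabels_sublist_of_subtreeAt h)

theorem disjoint_leafLabels_of_subtreeAt : ∀ {A P Q : PTree r} {p q : List Bool},
    A.leafLabels.Nodup → A.subtreeAt p = some P → A.subtreeAt q = some Q →
    ¬ (p <+: q) → ¬ (q <+: p) → P.leafLabels.Disjoint Q.leafLabels
  | _, _, _, [], _, _, _, _, hpq, _ => absurd List.nil_prefix hpq
  | _, _, _, _ :: _, [], _, _, _, _, hqp => absurd List.nil_prefix hqp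
  | .leaf _, _, _, _ :: _, _ :: _, _, hP, _, _, _ => by cases hP
  | .node L R, _, _, b :: p, c :: q, hN, hP, hQ, hpq, hqp => by
    obtain ⟨hNL, hNR, hLR⟩ := List.nodup_append'.1 hN
    cases b <;> cases c
    · exact disjoint_leafLabels_of_subtreeAt hNL hP hQ
        (fun h => hpq (List.cons_prefix_cons.2 ⟨rfl, h⟩))
        (fun h => hqp (List.cons_prefix_cons.2 ⟨rfl, h⟩))
    · exact fun _ ha hb => hLR ((leafLabels_sublist_of_subtreeAt (A := L) hP).subset ha)
        ((leafLabels_sublist_of_subtreeAt (A := R) hQ).subset hb)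
    · exact fun _ ha hb => hLR ((leafLabels_sublist_of_subtreeAt (A := L) hQ).subset hb)
        ((leafLabels_sublist_of_subtreeAt (A := R) hP).subset ha)
    · exact disjoint_leafLabels_of_subtreeAt hNR hP hQ
        (fun h => hpq (List.cons_prefix_cons.2 ⟨rfl, h⟩))
        (fun h => hqp (List.cons_prefix_cons.2 ⟨rfl, h⟩))

theorem rightmost_eq_of_mem_subtreeAt : ∀ {T B : PTree r} {s : List Bool},
    T.leafLabels.Nodup → T.subtreeAt s = some B → T.rightmost ∈ B.leafLabels →
    T.rightmost = B.rightmost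
  | T, B, [], _, h, _ => by
    rw [subtreeAt_nil, Option.some_inj] at h
    rw [h]
  | .leaf _, _, _ :: _, _, h, _ => by cases h
  | .node _ R, _, true :: _, hN, h, hm =>
    rightmost_eq_of_mem_subtreeAt (T := R) (List.nodup_append'.1 hN).2.1 h hm
  | .node L R, _, false :: _, hN, h, hm =>
    ((List.nodup_append'.1 hN).2.2 ((leafLabels_sublist_of_subtreeAt (A := L) h).subset hm)
      (rightmost_mem_leafLabels R)).elim

theorem rightmost_eq_of_not_prefix {A B T : PTree r} {e q : List Bool}
    (hN : A.leafLabels.Nodup) (hB : A.subtreeAt e = some B) (hT : A.subtreeAt q = some T)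
    (hq : ¬ (e <+: q)) (hm : T.rightmost ∈ B.leafLabels) : T.rightmost = B.rightmost := by
  by_cases hqe : q <+: e
  · obtain ⟨s, rfl⟩ := hqe
    rw [subtreeAt_append, hT, Option.bind_some] at hB
    exact rightmost_eq_of_mem_subtreeAt (nodup_leafLabels_of_subtreeAt hN hT) hB hm
  · exact (disjoint_leafLabels_of_subtreeAt hN hB hT hq hqe hm
      (rightmost_mem_leafLabels T)).elim

theorem xAt_eq_xval {A T : PTree r} {p : List Bool} (h : A.subtreeAt p = some T)
    (z : Fin r → ℂ) : A.xAt z p = xval z T := by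
  simp [xAt, h]

theorem xAt_ne_zero {A L R : PTree r} {p : List Bool} {z : Fin r → ℂ}
    (hN : A.leafLabels.Nodup) (hz : z ∈ ConfigSpace r) (h : A.subtreeAt p = some (node L R)) :
    A.xAt z p ≠ 0 := by
  rw [xAt_eq_xval h]
  have hLR := List.nodup_append'.1 (nodup_leafLabels_of_subtreeAt hN h)
  exact sub_ne_zero.2 (hz _ _ fun hEq => hLR.2.2 (rightmost_mem_leafLabels L)
    (hEq ▸ rightmost_mem_leafLabels R))

theorem IsEdge.isVertex_dropLast {A : PTree r} {p : List Bool} (he : A.IsEdge p) :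
    A.IsVertex p.dropLast := by
  obtain ⟨hp, L, R, h⟩ := he
  rw [← List.dropLast_append_getLast hp, subtreeAt_append] at h
  rcases hQ : A.subtreeAt p.dropLast with _ | _ | ⟨L', R'⟩
  · simp [hQ] at h
  · simp [hQ, subtreeAt] at h
  · exact ⟨L', R', hQ⟩

theorem zetaAt_ne_zero {A : PTree r} {p : List Bool} {z : Fin r → ℂ}
    (hN : A.leafLabels.Nodup) (hz : z ∈ ConfigSpace r) (he : A.IsEdge p) :
    A.zetaAt z p ≠ 0 := by
  obtain ⟨L, R, h⟩ := he.2
  obtain ⟨L', R', h'⟩ := he.isVertex_dropLast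
  exact div_ne_zero (xAt_ne_zero hN hz h) (xAt_ne_zero hN hz h')

section DilateLeaves

variable {A B : PTree r} {e q : List Bool} {z : Fin r → ℂ} {c : ℂ}

theorem xAt_dilate_of_prefix {ρ : Fin r} (hB : A.subtreeAt e = some B) (hq : e <+: q) :
    A.xAt (dilate B.leafLabels ρ c z) q = c * A.xAt z q := by
  obtain ⟨s, rfl⟩ := hq
  rcases hT : A.subtreeAt (e ++ s) with _ | _ | ⟨L, R⟩
  · simp [xAt, hT]
  · simp [xAt, hT, xval]
  · rw [xAt_eq_xval hT, xAt_eq_xval hT]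
    rw [subtreeAt_append, hB, Option.bind_some] at hT
    have hsub := (leafLabels_sublist_of_subtreeAt hT).subset
    exact dilate_sub_dilate (hsub (List.mem_append_left _ (rightmost_mem_leafLabels L)))
      (hsub (List.mem_append_right _ (rightmost_mem_leafLabels R)))

theorem xAt_dilate_of_not_prefix (hN : A.leafLabels.Nodup) (hB : A.subtreeAt e = some B)
    (hq : ¬ (e <+: q)) : A.xAt (dilate B.leafLabels B.rightmost c z) q = A.xAt z q := by
  rcases hT : A.subtreeAt q with _ | _ | ⟨L, R⟩
  · simp [xAt, hT]
  · simp [xAt, hT, xval]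
  · have hchild : ∀ (b : Bool) (C : PTree r), A.subtreeAt (q ++ [b]) = some C →
        dilate B.leafLabels B.rightmost c z C.rightmost = z C.rightmost := by
      intro b C hC
      refine dilate_apply_of_mem_imp fun hm => ?_
      by_cases hCB : e = q ++ [b]
      · subst hCB
        rw [hB, Option.some_inj] at hC
        rw [hC]
      · exact rightmost_eq_of_not_prefix hN hB hC
          (fun h => (List.prefix_concat_iff.1 h).elim hCB hq) hm
    rw [xAt_eq_xval hT, xAt_eq_xval hT]
    have hL : A.subtreeAt (q ++ [false]) = some L := by rw [subtreeAt_append, hT]; rfl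
    have hR : A.subtreeAt (q ++ [true]) = some R := by rw [subtreeAt_append, hT]; rfl
    exact congr_arg₂ (· - ·) (hchild false L hL) (hchild true R hR)

theorem psi_dilate (hN : A.leafLabels.Nodup) (he : A.IsEdge e) (hB : A.subtreeAt e = some B)
    (hc : c ≠ 0) :
    A.psi (dilate B.leafLabels B.rightmost c z) =
      ((A.psi z).1, (A.psi z).2.1, Function.update (A.psi z).2.2 ⟨e, he⟩ (c * A.zetaAt z e)) := by
  have hroot : ¬ (e <+: []) := by rw [List.prefix_nil]; exact he.1
  refine Prod.ext ?_ (Prod.ext ?_ (funext fun e' => ?_))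
  · exact dilate_apply_of_mem_imp (rightmost_eq_of_not_prefix hN hB (subtreeAt_nil A) hroot)
  · simpa only [psi, xAt_eq_xval (subtreeAt_nil A)] using
      xAt_dilate_of_not_prefix (c := c) (z := z) hN hB hroot
  · show A.zetaAt _ e'.1 = Function.update (A.psi z).2.2 ⟨e, he⟩ (c * A.zetaAt z e) e'
    rcases eq_or_ne e' ⟨e, he⟩ with rfl | he'
    · rw [Function.update_self, zetaAt, xAt_dilate_of_prefix hB List.prefix_rfl,
        xAt_dilate_of_not_prefix hN hB (List.not_prefix_dropLast he.1), mul_div_assoc]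
      rfl
    · rw [Function.update_of_ne he']
      by_cases hp : e <+: e'.1
      · have hne : e ≠ e'.1 := fun h => he' (Subtype.ext h.symm)
        rw [zetaAt, xAt_dilate_of_prefix hB hp,
          xAt_dilate_of_prefix hB (List.prefix_dropLast_of_ne hp hne), mul_div_mul_left _ _ hc]
        rfl
      · rw [zetaAt, xAt_dilate_of_not_prefix hN hB hp,
          xAt_dilate_of_not_prefix hN hB fun h => hp (h.trans (List.dropLast_prefix _))]
        rfl

end DilateLeaves

end PTree

open Filter Topology PTree in
theorem stmt_9_general {r : ℕ} (A : PTree r) (hA : A.IsTree)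
    (e₀ : List Bool) (he₀ : A.IsEdge e₀)
    (ρ : Fin r) (hρ : A.rightmostAt e₀ = some ρ)
    (P : Fin r → MvPolynomial A.Idx ℂ)
    (hPhiPsi : A.PhiPsiId P)
    (z : Fin r → ℂ) (hz : z ∈ ConfigSpace r)
    (f : (Fin r → ℂ) → ℂ) (hf : DifferentiableAt ℂ f z) :
    ((A.leavesAt e₀).map fun l => (z l - z ρ) * fderiv ℂ f z (Pi.single l 1)).sum =
      A.zetaAt z e₀ *
        deriv
          (fun t : ℂ =>
            f (A.phiMap P
                ((A.psi z).1, (A.psi z).2.1,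
                  Function.update (A.psi z).2.2 ⟨e₀, he₀⟩ t)))
          (A.zetaAt z e₀) := by
  obtain ⟨L, R, hB⟩ := he₀.2
  set B : PTree r := node L R
  obtain rfl : B.rightmost = ρ := by simpa [rightmostAt, hB] using hρ
  have hleaves : A.leavesAt e₀ = B.leafLabels := by rw [leavesAt, hB]; rfl
  set ζ := A.zetaAt z e₀
  have hζ : ζ ≠ 0 := zetaAt_ne_zero hA.1 hz he₀
  set γ : ℂ → Fin r → ℂ := fun t => dilate B.leafLabels B.rightmost (t / ζ) z
  have hγζ : γ ζ = z := by simp only [γ, div_self hζ, dilate_one]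
  set u : Fin r → ℂ := fun m => if m ∈ B.leafLabels then z m - z B.rightmost else 0
  have hγ : HasDerivAt γ (ζ⁻¹ • u) ζ := by
    have h := (hasDerivAt_dilate (S := B.leafLabels) (ρ := B.rightmost) (z := z) (ζ / ζ)).scomp
      (h := (· / ζ)) ζ ((hasDerivAt_id' ζ).div_const ζ)
    rwa [one_div] at h
  have hcurve : (fun t => f (A.phiMap P ((A.psi z).1, (A.psi z).2.1,
      Function.update (A.psi z).2.2 ⟨e₀, he₀⟩ t))) =ᶠ[𝓝 ζ] f ∘ γ := by
    have hX : ∀ᶠ t in 𝓝 ζ, γ t ∈ ConfigSpace r :=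
      hγ.continuousAt.eventually_mem (hγζ ▸ (isOpen_configSpace r).mem_nhds hz)
    filter_upwards [eventually_ne_nhds hζ, hX] with t ht htX
    rw [Function.comp_apply, ← hPhiPsi _ htX, psi_dilate hA.1 he₀ hB (div_ne_zero ht hζ),
      div_mul_cancel₀ t hζ]
  have hfγ := hf.hasFDerivAt.comp_hasDerivAt_of_eq ζ hγ hγζ.symm
  rw [hleaves, sum_map_mul_apply_single _ (nodup_leafLabels_of_subtreeAt hA.1 hB),
    hcurve.deriv_eq, hfγ.deriv, map_smul, smul_eq_mul, ← mul_assoc, mul_inv_cancel₀ hζ, one_mul]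

/-- Let `r ≥ 3`, `A ∈ 𝒯_r` and `e₀ ∈ E(A)`, and let `Φ_A` be the polynomial
map inverting `Ψ_A`.  For every point `z ∈ X_r` and every function
`f : ℂ^r → ℂ` complex-differentiable at `z`,
`Σ_{l ∈ Leaf(e₀)} (z_l − z_{R(d(e₀))}) · ∂f/∂z_l (z)
  = ζ_{e₀}(z) · ∂(f ∘ Φ_A)/∂ζ_{e₀} (Ψ_A(z))`,
where the partial derivative on the right is taken in the `ζ_{e₀}`-slot of the
`A`-coordinates; that is, the differential operator `ζ_e d/dζ_e` in
`A`-coordinates equals `Σ_{l ∈ Leaf(e)} (z_l − z_{R(d(e))}) ∂_l` on `X_r`. -/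
theorem stmt_9 {r : ℕ} (hr : 3 ≤ r) (A : PTree r) (hA : A.IsTree)
    (e₀ : List Bool) (he₀ : A.IsEdge e₀)
    (ρ : Fin r) (hρ : A.rightmostAt e₀ = some ρ)
    (P : Fin r → MvPolynomial A.Idx ℂ)
    (hPhiPsi : A.PhiPsiId P) (hPsiPhi : A.PsiPhiId P)
    (z : Fin r → ℂ) (hz : z ∈ ConfigSpace r)
    (f : (Fin r → ℂ) → ℂ) (hf : DifferentiableAt ℂ f z) :
    ((A.leavesAt e₀).map fun l => (z l - z ρ) * fderiv ℂ f z (Pi.single l 1)).sum =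
      A.zetaAt z e₀ *
        deriv
          (fun t : ℂ =>
            f (A.phiMap P
                ((A.psi z).1, (A.psi z).2.1,
                  Function.update (A.psi z).2.2 ⟨e₀, he₀⟩ t)))
          (A.zetaAt z e₀) :=
  stmt_9_general A hA e₀ he₀ ρ hρ P hPhiPsi z hz f hf
end
end

section
/- Let r ∈ ℕ, 𝔭 = (p_1,…,p_r) with p_i > 0, q > 0 and N ≥ 1. Let f_0,…,f_{N−1} and g be continuous functions on 𝔻_𝔭^cut × 𝔻_q with values in ℂ such that for each fixed ζ ∈ 𝔻_𝔭^cut the maps ξ ↦ f_k(ζ,ξ) and ξ ↦ g(ζ,ξ) are holomorphic on 𝔻_q; let a_{k,n}(ζ) and b_n(ζ) denote their n-th Taylor coefficients at ξ = 0. Let c_l : 𝔻_𝔭^cut → ℂ (l ∈ ℕ) be continuous functions, and assume the formal power series ψ = Σ_{l≥0} c_l(ζ) ξ^l satisfies the differential equation ((ξ d/dξ)^N + Σ_{k=0}^{N−1} f_k(ζ,ξ) (ξ d/dξ)^k) ψ = g(ζ,ξ) coefficientwise in ξ, i.e. for every ζ ∈ 𝔻_𝔭^cut and every P ∈ ℕ: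 P^N c_P(ζ) + Σ_{k=0}^{N−1} Σ_{l=0}^{P} a_{k,P−l}(ζ) l^k c_l(ζ) = b_P(ζ). Then the series Σ_{l≥0} c_l(ζ) ξ^l converges absolutely and locally uniformly on 𝔻_𝔭^cut × 𝔻_q; more precisely, for every compact K ⊆ 𝔻_𝔭^cut and every 0 < R < q one has Σ_{l≥0} (sup_{ζ∈K} |c_l(ζ)|) R^l < ∞. -/
noncomputable section

/-- The cut plane `ℂ^cut = ℂ ∖ ℝ_{≤0}`. -/
def cutPlane : Set ℂ := {w : ℂ | 0 < w.re ∨ w.im ≠ 0}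

/-- The cut disc `𝔻_t^cut = 𝔻_t ∩ ℂ^cut`. -/
def cutDisk (t : ℝ) : Set ℂ := {w : ℂ | w ∈ cutPlane ∧ ‖w‖ < t}

/-- The cut polydisc `𝔻_𝔭^cut = ∏_{i} 𝔻_{p_i}^cut ⊆ ℂ^r`. -/
def polyCutDisk {r : ℕ} (p : Fin r → ℝ) : Set (Fin r → ℂ) :=
  {ζ | ∀ i, ζ i ∈ cutDisk (p i)}

/-!
Cauchy's estimates on a circle of radius `ρ ∈ (R, q)`, made uniform in `ζ ∈ K` by continuity
and compactness, give `|a_{k,n}(ζ)|, |b_n(ζ)| ≤ M ρ^{-n}`. Writing `m_l = sup_K |c_l|`, the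
recursion then yields `m_P ≤ M ρ^{-P} + (N M / P) Σ_{l ≤ P} ρ^{-(P-l)} m_l` for `P ≥ 1`.
For `τ ∈ (R, ρ)` the rescaled `u_l = m_l τ^l` satisfy
`u_P ≤ M + (N M / P) Σ_{l ≤ P} (τ/ρ)^{P-l} u_l`; once `P` is large, the factor `1/P` beats the
geometric sum `Σ_j (τ/ρ)^j ≤ (1 - τ/ρ)⁻¹`, so strong induction bounds `u`, and `Σ m_l R^l` is
dominated by a geometric series in `R/τ`.
-/

open Metric Finset Filter
open scoped NNReal

theorem hasFPowerSeriesOnBall_ofScalars_of_hasSum {F : ℂ → ℂ} {A : ℕ → ℂ} {r : ℝ≥0}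
    (hr : 0 < r) (hs : ∀ ξ ∈ ball (0 : ℂ) r, HasSum (fun n => A n * ξ ^ n) (F ξ)) :
    HasFPowerSeriesOnBall F (.ofScalars ℂ A) 0 r := by
  refine ⟨?_, by exact_mod_cast hr, fun {y} hy => ?_⟩
  · refine ENNReal.le_of_forall_pos_nnreal_lt fun t _ ht => ?_
    refine FormalMultilinearSeries.le_radius_of_summable _ ?_
    simpa [FormalMultilinearSeries.ofScalars_norm, norm_mul] using
      (hs t (by simpa using ht)).summable.norm
  · rw [eball_coe, mem_ball_zero_iff] at hy
    simpa [FormalMultilinearSeries.ofScalars_apply_eq, mul_comm] using hs y (by simpa using hy)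

theorem norm_le_div_pow_of_hasSum {F : ℂ → ℂ} {A : ℕ → ℂ} {q ρ M : ℝ} (hρ : 0 < ρ)
    (hρq : ρ < q) (hs : ∀ ξ ∈ ball (0 : ℂ) q, HasSum (fun n => A n * ξ ^ n) (F ξ))
    (hM : ∀ ξ ∈ sphere (0 : ℂ) ρ, ‖F ξ‖ ≤ M) (n : ℕ) : ‖A n‖ ≤ M / ρ ^ n := by
  have hF : HasFPowerSeriesOnBall F (.ofScalars ℂ A) 0 q.toNNReal :=
    hasFPowerSeriesOnBall_ofScalars_of_hasSum (by simpa using hρ.trans hρq)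
      (by simpa [(hρ.trans hρq).le] using hs)
  have hA : A = fun n => iteratedDeriv n F 0 / n.factorial :=
    FormalMultilinearSeries.ofScalars_series_injective ℂ ℂ
      (hF.hasFPowerSeriesAt.eq_formalMultilinearSeries hF.analyticAt.hasFPowerSeriesAt)
  have hFρ : DiffContOnCl ℂ F (ball 0 ρ) :=
    have hdiff : DifferentiableOn ℂ F (ball 0 q) := by
      simpa [eball_coe, (hρ.trans hρq).le] using hF.differentiableOn
    hdiff.diffContOnCl_ball (closedBall_subset_ball hρq)
  have hn : (0 : ℝ) < n.factorial := by positivity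
  calc ‖A n‖ = ‖iteratedDeriv n F 0‖ / n.factorial := by simp [hA]
    _ ≤ n.factorial * M / ρ ^ n / n.factorial := by
      gcongr
      exact Complex.norm_iteratedDeriv_le_of_forall_mem_sphere_norm_le n hρ hFρ hM
    _ = M / ρ ^ n := by field_simp

theorem sum_range_pow_sub_le {x : ℝ} (hx0 : 0 ≤ x) (hx1 : x < 1) (n : ℕ) :
    ∑ l ∈ range n, x ^ (n - l) ≤ (1 - x)⁻¹ :=
  calc ∑ l ∈ range n, x ^ (n - l) ≤ ∑ l ∈ range (n + 1), x ^ (n - l) := by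
        rw [sum_range_succ]; simp
    _ = ∑ j ∈ range (n + 1), x ^ j := by
        simpa using sum_range_reflect (fun j => x ^ j) (n + 1)
    _ ≤ (1 - x)⁻¹ := by
        rw [← tsum_geometric_of_lt_one hx0 hx1]
        exact (summable_geometric_of_lt_one hx0 hx1).sum_le_tsum _
          fun j _ => pow_nonneg hx0 j

theorem bddAbove_range_of_le_add_div_mul_sum {u : ℕ → ℝ} {A B x : ℝ} (hA : 0 ≤ A)
    (hx0 : 0 ≤ x) (hx1 : x < 1)
    (h : ∀ P, 1 ≤ P → u P ≤ B + A / P * ∑ l ∈ range (P + 1), x ^ (P - l) * u l) :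
    BddAbove (Set.range u) := by
  set D := (1 - x)⁻¹
  obtain ⟨P₀, hP₀⟩ := exists_nat_ge (max (2 * A) (4 * A * D))
  set C := 4 * |B| + ∑ l ∈ range (P₀ + 1), |u l|
  have hCB : 4 * |B| ≤ C := le_add_of_nonneg_right (by positivity)
  have hC : 0 ≤ C := by positivity
  refine ⟨C, Set.forall_mem_range.2 fun P => ?_⟩
  induction P using Nat.strong_induction_on with
  | _ P ih =>
  rcases le_or_gt P P₀ with hP | hP
  · calc u P ≤ |u P| := le_abs_self _
      _ ≤ ∑ l ∈ range (P₀ + 1), |u l| :=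
        single_le_sum (fun l _ => abs_nonneg (u l)) (mem_range.2 (Nat.lt_succ_of_le hP))
      _ ≤ C := le_add_of_nonneg_left (by positivity)
  have hP0 : (0 : ℝ) < P := by exact_mod_cast Nat.zero_lt_of_lt hP
  have hPA : 2 * A ≤ P := (le_max_left _ _).trans (hP₀.trans (by exact_mod_cast hP.le))
  have hPAD : 4 * A * D ≤ P := (le_max_right _ _).trans (hP₀.trans (by exact_mod_cast hP.le))
  have hpast : ∑ l ∈ range P, x ^ (P - l) * u l ≤ C * D :=
    calc ∑ l ∈ range P, x ^ (P - l) * u l ≤ ∑ l ∈ range P, x ^ (P - l) * C :=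
          sum_le_sum fun l hl =>
            mul_le_mul_of_nonneg_left (ih l (mem_range.1 hl)) (by positivity)
      _ ≤ C * D := by
          rw [← sum_mul, mul_comm]
          exact mul_le_mul_of_nonneg_left (sum_range_pow_sub_le hx0 hx1 P) hC
  have hrec := h P (Nat.one_le_of_lt hP)
  rw [sum_range_succ, Nat.sub_self, pow_zero, one_mul] at hrec
  have hAP : A / P ≤ 1 / 2 := by rw [div_le_iff₀ hP0]; linarith
  have hAPD : A / P * (C * D) ≤ C / 4 := by
    rw [div_mul_eq_mul_div, div_le_iff₀ hP0]; nlinarith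
  have hpast' := mul_le_mul_of_nonneg_left hpast (div_nonneg hA hP0.le)
  rcases le_or_gt (u P) 0 with hu | hu
  · linarith
  · have : A / P * u P ≤ u P / 2 := by nlinarith
    linarith [le_abs_self B]

theorem bddAbove_range_mul_pow_of_le_div_pow_add {m : ℕ → ℝ} {A B ρ τ : ℝ} (hA : 0 ≤ A)
    (hB : 0 ≤ B) (hτ : 0 < τ) (hτρ : τ < ρ)
    (h : ∀ P, 1 ≤ P → m P ≤ B / ρ ^ P + A / P * ∑ l ∈ range (P + 1), m l / ρ ^ (P - l)) :
    BddAbove (Set.range fun l => m l * τ ^ l) := by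
  have hρ : 0 < ρ := hτ.trans hτρ
  have hx : τ / ρ < 1 := (div_lt_one hρ).2 hτρ
  refine bddAbove_range_of_le_add_div_mul_sum (B := B) hA (by positivity) hx fun P hP => ?_
  calc m P * τ ^ P
      ≤ (B / ρ ^ P + A / P * ∑ l ∈ range (P + 1), m l / ρ ^ (P - l)) * τ ^ P := by
        gcongr; exact h P hP
    _ = B * (τ / ρ) ^ P + A / P * ∑ l ∈ range (P + 1), (τ / ρ) ^ (P - l) * (m l * τ ^ l) := by
        rw [add_mul, mul_assoc, sum_mul, div_pow]
        congr 1
        · field_simp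
        · refine congrArg _ (sum_congr rfl fun l hl => ?_)
          rw [← pow_sub_mul_pow τ (Nat.lt_succ_iff.1 (mem_range.1 hl)), div_pow]
          ring
    _ ≤ B + A / P * ∑ l ∈ range (P + 1), (τ / ρ) ^ (P - l) * (m l * τ ^ l) := by
        gcongr
        exact mul_le_of_le_one_right hB (pow_le_one₀ (by positivity) hx.le)

theorem norm_le_of_recursion {N P : ℕ} (hP : 1 ≤ P) {α : ℕ → ℕ → ℂ} {β γ : ℕ → ℂ}
    {m : ℕ → ℝ} {M ρ : ℝ} (hM : 0 ≤ M) (hρ : 0 ≤ ρ)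
    (hrec : (P : ℂ) ^ N * γ P +
      ∑ k ∈ range N, ∑ l ∈ range (P + 1), α k (P - l) * (l : ℂ) ^ k * γ l = β P)
    (hα : ∀ k < N, ∀ n, ‖α k n‖ ≤ M / ρ ^ n) (hβ : ‖β P‖ ≤ M / ρ ^ P)
    (hγ : ∀ l, ‖γ l‖ ≤ m l) :
    ‖γ P‖ ≤ M / ρ ^ P + N * M / P * ∑ l ∈ range (P + 1), m l / ρ ^ (P - l) := by
  set S := ∑ l ∈ range (P + 1), m l / ρ ^ (P - l)
  have hP0 : (0 : ℝ) < P := by exact_mod_cast hP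
  have hS : 0 ≤ S :=
    sum_nonneg fun l _ => div_nonneg ((norm_nonneg _).trans (hγ l)) (by positivity)
  have hterm : ∀ k ∈ range N, ∀ l ∈ range (P + 1),
      ‖α k (P - l) * (l : ℂ) ^ k * γ l‖ ≤ (P : ℝ) ^ k * M * (m l / ρ ^ (P - l)) := by
    intro k hk l hl
    have hl : (l : ℝ) ≤ P := by exact_mod_cast Nat.lt_succ_iff.1 (mem_range.1 hl)
    rw [norm_mul, norm_mul, norm_pow, Complex.norm_natCast]
    calc ‖α k (P - l)‖ * (l : ℝ) ^ k * ‖γ l‖ ≤ M / ρ ^ (P - l) * (P : ℝ) ^ k * m l := by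
          gcongr
          · exact hα k (mem_range.1 hk) _
          · exact hγ l
      _ = (P : ℝ) ^ k * M * (m l / ρ ^ (P - l)) := by ring
  have hpow : ∑ k ∈ range N, (P : ℝ) ^ k ≤ N * (P : ℝ) ^ N / P := by
    rw [le_div_iff₀ hP0, sum_mul]
    calc ∑ k ∈ range N, (P : ℝ) ^ k * P ≤ ∑ k ∈ range N, (P : ℝ) ^ N :=
          sum_le_sum fun k hk => by
            rw [← pow_succ]; exact pow_le_pow_right₀ (by exact_mod_cast hP) (mem_range.1 hk)
      _ = N * (P : ℝ) ^ N := by simp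
  have hmain : (P : ℝ) ^ N * ‖γ P‖ ≤ M / ρ ^ P + N * (P : ℝ) ^ N / P * M * S :=
    calc (P : ℝ) ^ N * ‖γ P‖ = ‖β P - ∑ k ∈ range N, ∑ l ∈ range (P + 1),
          α k (P - l) * (l : ℂ) ^ k * γ l‖ := by
          rw [← eq_sub_of_add_eq hrec, norm_mul, norm_pow, Complex.norm_natCast]
      _ ≤ M / ρ ^ P + ∑ k ∈ range N, (P : ℝ) ^ k * M * S := by
          refine (norm_sub_le _ _).trans (add_le_add hβ ((norm_sum_le _ _).trans
            (sum_le_sum fun k hk => (norm_sum_le _ _).trans ?_)))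
          rw [mul_sum]; exact sum_le_sum (hterm k hk)
      _ ≤ M / ρ ^ P + N * (P : ℝ) ^ N / P * M * S := by
          rw [← sum_mul, ← sum_mul]; gcongr
  have hPN : (1 : ℝ) ≤ (P : ℝ) ^ N := one_le_pow₀ (by exact_mod_cast hP)
  refine le_of_mul_le_mul_left ?_ (zero_lt_one.trans_le hPN)
  calc (P : ℝ) ^ N * ‖γ P‖ ≤ M / ρ ^ P + N * (P : ℝ) ^ N / P * M * S := hmain
    _ ≤ (P : ℝ) ^ N * (M / ρ ^ P) + N * (P : ℝ) ^ N / P * M * S := by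
        gcongr; exact le_mul_of_one_le_left (by positivity) hPN
    _ = (P : ℝ) ^ N * (M / ρ ^ P + N * M / P * S) := by ring

theorem eventually_forall_norm_le_div_pow {X : Type*} [TopologicalSpace X] {S K : Set X}
    {q ρ : ℝ} {F : X → ℂ → ℂ} {A : ℕ → X → ℂ}
    (hF : ContinuousOn (fun w : X × ℂ => F w.1 w.2) (S ×ˢ ball 0 q))
    (hA : ∀ ζ ∈ S, ∀ ξ ∈ ball (0 : ℂ) q, HasSum (fun n => A n ζ * ξ ^ n) (F ζ ξ))
    (hK : IsCompact K) (hKS : K ⊆ S) (hρ : 0 < ρ) (hρq : ρ < q) :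
    ∀ᶠ M in atTop, ∀ ζ ∈ K, ∀ n, ‖A n ζ‖ ≤ M / ρ ^ n := by
  obtain ⟨M₀, hM₀⟩ := (hK.prod (isCompact_sphere 0 ρ)).exists_bound_of_continuousOn
    (hF.mono (Set.prod_mono hKS (sphere_subset_ball hρq)))
  filter_upwards [eventually_ge_atTop M₀] with M hM ζ hζ n
  exact norm_le_div_pow_of_hasSum hρ hρq (hA ζ (hKS hζ))
    (fun ξ hξ => (hM₀ (ζ, ξ) ⟨hζ, hξ⟩).trans hM) n

theorem summable_mul_pow_of_bddAbove_range_mul_pow {m : ℕ → ℝ} {R τ : ℝ} (hm : ∀ l, 0 ≤ m l)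
    (hR : 0 ≤ R) (hRτ : R < τ) (h : BddAbove (Set.range fun l => m l * τ ^ l)) :
    Summable fun l => m l * R ^ l := by
  obtain ⟨C, hC⟩ := h
  have hτ : 0 < τ := hR.trans_lt hRτ
  refine Summable.of_nonneg_of_le (fun l => mul_nonneg (hm l) (by positivity)) (fun l => ?_)
    ((summable_geometric_of_lt_one (by positivity) ((div_lt_one hτ).2 hRτ)).mul_left C)
  calc m l * R ^ l = m l * τ ^ l * (R / τ) ^ l := by
        rw [div_pow, mul_assoc, mul_div_cancel₀ _ (pow_ne_zero l hτ.ne')]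
    _ ≤ C * (R / τ) ^ l := mul_le_mul_of_nonneg_right (hC ⟨l, rfl⟩) (by positivity)

theorem stmt_15_general {r : ℕ} (p : Fin r → ℝ)
    (q : ℝ) (N : ℕ)
    (f : ℕ → (Fin r → ℂ) → ℂ → ℂ) (g : (Fin r → ℂ) → ℂ → ℂ)
    (hfcont : ∀ k < N, ContinuousOn (fun w : (Fin r → ℂ) × ℂ => f k w.1 w.2)
      (polyCutDisk p ×ˢ Metric.ball (0 : ℂ) q))
    (hgcont : ContinuousOn (fun w : (Fin r → ℂ) × ℂ => g w.1 w.2)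
      (polyCutDisk p ×ˢ Metric.ball (0 : ℂ) q))
    (a : ℕ → ℕ → (Fin r → ℂ) → ℂ) (b : ℕ → (Fin r → ℂ) → ℂ)
    (ha : ∀ k < N, ∀ ζ ∈ polyCutDisk p, ∀ ξ ∈ Metric.ball (0 : ℂ) q,
      HasSum (fun n : ℕ => a k n ζ * ξ ^ n) (f k ζ ξ))
    (hb : ∀ ζ ∈ polyCutDisk p, ∀ ξ ∈ Metric.ball (0 : ℂ) q,
      HasSum (fun n : ℕ => b n ζ * ξ ^ n) (g ζ ξ))
    (c : ℕ → (Fin r → ℂ) → ℂ)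
    (hccont : ∀ l, ContinuousOn (c l) (polyCutDisk p))
    (hrec : ∀ ζ ∈ polyCutDisk p, ∀ P : ℕ,
      (P : ℂ) ^ N * c P ζ +
          ∑ k ∈ Finset.range N, ∑ l ∈ Finset.range (P + 1),
            a k (P - l) ζ * (l : ℂ) ^ k * c l ζ =
        b P ζ) :
    ∀ K : Set (Fin r → ℂ), IsCompact K → K ⊆ polyCutDisk p →
      ∀ R : ℝ, 0 < R → R < q →
        Summable (fun l : ℕ =>
          sSup ((fun ζ => ‖c l ζ‖) '' K) * R ^ l) := by
  intro K hK hKsub R hR hRq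
  obtain ⟨ρ, hRρ, hρq⟩ := exists_between hRq
  obtain ⟨τ, hRτ, hτρ⟩ := exists_between hRρ
  have hρ : 0 < ρ := hR.trans hRρ
  obtain ⟨M, hM, haM, hbM⟩ : ∃ M : ℝ, 0 ≤ M ∧
      (∀ k ∈ range N, ∀ ζ ∈ K, ∀ n, ‖a k n ζ‖ ≤ M / ρ ^ n) ∧
      ∀ ζ ∈ K, ∀ n, ‖b n ζ‖ ≤ M / ρ ^ n :=
    ((eventually_ge_atTop 0).and (((eventually_all_finset _).2 fun k hk =>
      eventually_forall_norm_le_div_pow (hfcont k (mem_range.1 hk)) (ha k (mem_range.1 hk))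
        hK hKsub hρ hρq).and
      (eventually_forall_norm_le_div_pow hgcont hb hK hKsub hρ hρq))).exists
  set m : ℕ → ℝ := fun l => sSup ((fun ζ => ‖c l ζ‖) '' K)
  have hcm : ∀ l, ∀ ζ ∈ K, ‖c l ζ‖ ≤ m l := fun l ζ hζ =>
    le_csSup (hK.image_of_continuousOn ((hccont l).mono hKsub).norm).bddAbove ⟨ζ, hζ, rfl⟩
  have hm : ∀ l, 0 ≤ m l := fun l =>
    Real.sSup_nonneg (by rintro _ ⟨ζ, -, rfl⟩; exact norm_nonneg _)
  have hmrec : ∀ P, 1 ≤ P →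
      m P ≤ M / ρ ^ P + N * M / P * ∑ l ∈ range (P + 1), m l / ρ ^ (P - l) := fun P hP =>
    Real.sSup_le
      (by
        rintro _ ⟨ζ, hζ, rfl⟩
        exact norm_le_of_recursion (α := fun k n => a k n ζ) (β := fun n => b n ζ) hP hM hρ.le
          (hrec ζ (hKsub hζ) P) (fun k hk => haM k (mem_range.2 hk) ζ hζ) (hbM ζ hζ P)
          (fun l => hcm l ζ hζ))
      (add_nonneg (div_nonneg hM (by positivity))
        (mul_nonneg (div_nonneg (mul_nonneg N.cast_nonneg hM) P.cast_nonneg)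
          (sum_nonneg fun l _ => div_nonneg (hm l) (by positivity))))
  exact summable_mul_pow_of_bddAbove_range_mul_pow hm hR.le hRτ
    (bddAbove_range_mul_pow_of_le_div_pow_add (mul_nonneg N.cast_nonneg hM) hM (hR.trans hRτ) hτρ
      hmrec)

/-- Frobenius-type convergence lemma.  Let `f_0,…,f_{N−1}` and `g` be
continuous on `𝔻_𝔭^cut × 𝔻_q`, holomorphic in the second variable `ξ ∈ 𝔻_q`
for each fixed `ζ`, with Taylor coefficients `a k n ζ` and `b n ζ` at `ξ = 0`.
Let `c_l : 𝔻_𝔭^cut → ℂ` be continuous and assume the formal power series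
`ψ = Σ_l c_l(ζ) ξ^l` satisfies
`((ξ d/dξ)^N + Σ_{k<N} f_k(ζ,ξ)(ξ d/dξ)^k) ψ = g(ζ,ξ)` coefficientwise in
`ξ`.  Then `Σ_l c_l(ζ) ξ^l` converges absolutely and locally uniformly on
`𝔻_𝔭^cut × 𝔻_q`: for every compact `K ⊆ 𝔻_𝔭^cut` and every `0 < R < q` one
has `Σ_l (sup_{ζ∈K} |c_l(ζ)|)·R^l < ∞`. -/
theorem stmt_15 {r : ℕ} (p : Fin r → ℝ) (hp : ∀ i, 0 < p i)
    (q : ℝ) (hq : 0 < q) (N : ℕ) (hN : 1 ≤ N)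
    (f : ℕ → (Fin r → ℂ) → ℂ → ℂ) (g : (Fin r → ℂ) → ℂ → ℂ)
    (hfcont : ∀ k < N, ContinuousOn (fun w : (Fin r → ℂ) × ℂ => f k w.1 w.2)
      (polyCutDisk p ×ˢ Metric.ball (0 : ℂ) q))
    (hgcont : ContinuousOn (fun w : (Fin r → ℂ) × ℂ => g w.1 w.2)
      (polyCutDisk p ×ˢ Metric.ball (0 : ℂ) q))
    (hfhol : ∀ k < N, ∀ ζ ∈ polyCutDisk p,
      DifferentiableOn ℂ (f k ζ) (Metric.ball (0 : ℂ) q))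
    (hghol : ∀ ζ ∈ polyCutDisk p,
      DifferentiableOn ℂ (g ζ) (Metric.ball (0 : ℂ) q))
    (a : ℕ → ℕ → (Fin r → ℂ) → ℂ) (b : ℕ → (Fin r → ℂ) → ℂ)
    (ha : ∀ k < N, ∀ ζ ∈ polyCutDisk p, ∀ ξ ∈ Metric.ball (0 : ℂ) q,
      HasSum (fun n : ℕ => a k n ζ * ξ ^ n) (f k ζ ξ))
    (hb : ∀ ζ ∈ polyCutDisk p, ∀ ξ ∈ Metric.ball (0 : ℂ) q,
      HasSum (fun n : ℕ => b n ζ * ξ ^ n) (g ζ ξ))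
    (c : ℕ → (Fin r → ℂ) → ℂ)
    (hccont : ∀ l, ContinuousOn (c l) (polyCutDisk p))
    (hrec : ∀ ζ ∈ polyCutDisk p, ∀ P : ℕ,
      (P : ℂ) ^ N * c P ζ +
          ∑ k ∈ Finset.range N, ∑ l ∈ Finset.range (P + 1),
            a k (P - l) ζ * (l : ℂ) ^ k * c l ζ =
        b P ζ) :
    ∀ K : Set (Fin r → ℂ), IsCompact K → K ⊆ polyCutDisk p →
      ∀ R : ℝ, 0 < R → R < q →
        Summable (fun l : ℕ =>
          sSup ((fun ζ => ‖c l ζ‖) '' K) * R ^ l) :=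
  stmt_15_general p q N f g hfcont hgcont a b ha hb c hccont hrec
end
end
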